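/- arXiv:1708.06322 — 2 statements merged into one kernel-verified Lean document; each statement's English description precedes it below -/
import Mathlib

section
/- Let d, φ, and w be smooth 2π-periodic functions with zero mean. Then ⟨d_xx, d_xxxx + 2(d_x φ_x)_xx⟩ + ⟨d_xx, ((d_x)²)_xx⟩ + ⟨d_xx, w_x⟩ ≤ (7⁷/4) ‖d_x‖^{10} + (9‖φ_xx‖_∞² − 1/4) ‖d_x‖² + ‖w‖². -/
open MeasureTheory Real Filter

/-- The L² norm on [0,2π]. -/
noncomputable def L2norm (f : ℝ → ℝ) : ℝ :=
  Real.sqrt (∫ x in (0:ℝ)..(2*Real.pi), (f x)^2)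

/-- The L² inner product on [0,2π]. -/
noncomputable def L2inner (f g : ℝ → ℝ) : ℝ :=
  ∫ x in (0:ℝ)..(2*Real.pi), f x * g x

/-- The supremum norm on [0,2π]. -/
noncomputable def supNorm (f : ℝ → ℝ) : ℝ :=
  sSup ((fun x => |f x|) '' Set.Icc (0:ℝ) (2*Real.pi))

/-- The operator A_φ u = -∂_x⁴ u - 2 ∂_x³ (φ_x u). -/
noncomputable def Aop (φ u : ℝ → ℝ) : ℝ → ℝ :=
  fun x => -(iteratedDeriv 4 u x) - 2 * iteratedDeriv 3 (fun y => deriv φ y * u y) x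

/-- Membership in 𝓗 (smooth part): smooth, 2π-periodic, zero mean on [0,2π]. -/
def InH (u : ℝ → ℝ) : Prop :=
  ContDiff ℝ (⊤ : ℕ∞) u ∧ Function.Periodic u (2*Real.pi) ∧
    (∫ x in (0:ℝ)..(2*Real.pi), u x) = 0

/-- Membership in H_n: real trigonometric polynomials spanned by e^{ikx}, 1 ≤ |k| ≤ n. -/
def InHn (n : ℕ) (p : ℝ → ℝ) : Prop :=
  ∃ a b : ℕ → ℝ,
    p = fun x => ∑ k ∈ Finset.Icc 1 n, (a k * Real.cos (k*x) + b k * Real.sin (k*x))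

/-- λ_n(φ) = sup { ⟨A_φ p, p⟩ : p ∈ H_n, ‖p‖ = 1 }. -/
noncomputable def lamN (n : ℕ) (φ : ℝ → ℝ) : ℝ :=
  sSup {r : ℝ | ∃ p : ℝ → ℝ, InHn n p ∧ L2norm p = 1 ∧ r = L2inner (Aop φ p) p}

/-- λ(φ) = sup { ⟨A_φ u, u⟩ : u smooth in 𝓗, ‖u‖ = 1 }. -/
noncomputable def lam (φ : ℝ → ℝ) : ℝ :=
  sSup {r : ℝ | ∃ u : ℝ → ℝ, InH u ∧ L2norm u = 1 ∧ r = L2inner (Aop φ u) u}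

/-- All Fourier coefficients ĉ_k of q vanish for |k| ≤ n. -/
def HighModes (n : ℕ) (q : ℝ → ℝ) : Prop :=
  ∀ k : ℤ, |k| ≤ (n : ℤ) →
    (∫ x in (0:ℝ)..(2*Real.pi), (q x : ℂ) * Complex.exp (-Complex.I * (k:ℂ) * (x:ℂ))) = 0

namespace S15

lemma pi2_pos : (0:ℝ) < 2*Real.pi := by positivity

lemma smooth_deriv {f : ℝ → ℝ} (h : ContDiff ℝ (⊤ : ℕ∞) f) : ContDiff ℝ (⊤ : ℕ∞) (deriv f) := by
  rw [show (((⊤:ℕ∞)) : WithTop ℕ∞) = ((⊤:ℕ∞) : WithTop ℕ∞) + 1 from rfl] at h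
  exact (contDiff_succ_iff_deriv.mp h).2.2

lemma smooth_iter {f : ℝ → ℝ} (h : ContDiff ℝ (⊤ : ℕ∞) f) (n : ℕ) :
    ContDiff ℝ (⊤ : ℕ∞) (iteratedDeriv n f) := by
  induction n with
  | zero => simpa using h
  | succ k ih => rw [iteratedDeriv_succ]; exact smooth_deriv ih

lemma smooth_hasDerivAt {f : ℝ → ℝ} (h : ContDiff ℝ (⊤ : ℕ∞) f) (x : ℝ) :
    HasDerivAt f (deriv f x) x :=
  ((h.differentiable (by simp)) x).hasDerivAt

lemma hasDerivAt_iter {f : ℝ → ℝ} (h : ContDiff ℝ (⊤ : ℕ∞) f) (n : ℕ) (x : ℝ) :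
    HasDerivAt (iteratedDeriv n f) (iteratedDeriv (n+1) f x) x := by
  rw [iteratedDeriv_succ]
  exact smooth_hasDerivAt (smooth_iter h n) x

lemma periodic_deriv {f : ℝ → ℝ} (h : Function.Periodic f (2*Real.pi)) :
    Function.Periodic (deriv f) (2*Real.pi) := by
  intro x
  have hfe : (fun y => f (y + 2*Real.pi)) = f := funext h
  calc deriv f (x + 2*Real.pi) = deriv (fun y => f (y + 2*Real.pi)) x :=
        (deriv_comp_add_const f (2*Real.pi) x).symm
    _ = deriv f x := by rw [hfe]

lemma periodic_iter {f : ℝ → ℝ} (h : Function.Periodic f (2*Real.pi)) (n : ℕ) :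
    Function.Periodic (iteratedDeriv n f) (2*Real.pi) := by
  induction n with
  | zero => simpa using h
  | succ k ih => rw [iteratedDeriv_succ]; exact periodic_deriv ih

/-- Integration by parts for periodic functions on `[0, 2π]`. -/
lemma ibp {u v u' v' : ℝ → ℝ}
    (hu : ∀ x, HasDerivAt u (u' x) x) (hv : ∀ x, HasDerivAt v (v' x) x)
    (hcu : Continuous u) (hcv : Continuous v)
    (hcu' : Continuous u') (hcv' : Continuous v')
    (hb : u (2*Real.pi) * v (2*Real.pi) = u 0 * v 0) :
    ∫ x in (0:ℝ)..(2*Real.pi), u x * v' x = - ∫ x in (0:ℝ)..(2*Real.pi), u' x * v x := by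
  have h := intervalIntegral.integral_deriv_mul_eq_sub (a := 0) (b := 2*Real.pi)
      (fun x _ => hu x) (fun x _ => hv x)
      (hcu'.intervalIntegrable 0 (2*Real.pi)) (hcv'.intervalIntegrable 0 (2*Real.pi))
  rw [intervalIntegral.integral_add (f := fun x => u' x * v x) (g := fun x => u x * v' x) ((hcu'.mul hcv).intervalIntegrable 0 (2*Real.pi))
      ((hcu.mul hcv').intervalIntegrable 0 (2*Real.pi)), hb, sub_self] at h
  linarith [h]

/-- Cauchy–Schwarz on `[0, 2π]`. -/
lemma cs_core {f g : ℝ → ℝ} (hf : Continuous f) (hg : Continuous g) :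
    (∫ x in (0:ℝ)..(2*Real.pi), f x * g x) ≤ L2norm f * L2norm g := by
  set A := ∫ x in (0:ℝ)..(2*Real.pi), (f x)^2 with hA
  set B := ∫ x in (0:ℝ)..(2*Real.pi), (g x)^2 with hB
  set C := ∫ x in (0:ℝ)..(2*Real.pi), f x * g x with hC
  have hA0 : 0 ≤ A := intervalIntegral.integral_nonneg (le_of_lt pi2_pos)
    (fun x _ => sq_nonneg _)
  have hB0 : 0 ≤ B := intervalIntegral.integral_nonneg (le_of_lt pi2_pos)
    (fun x _ => sq_nonneg _)
  have hq : ∀ t : ℝ, 0 ≤ B * (t*t) + (2*C) * t + A := by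
    intro t
    have hfun : (fun x => (f x + t * g x)^2)
        = fun x => ((t*t) * (g x)^2 + (2*t) * (f x * g x)) + (f x)^2 := by
      funext x; ring
    have hexp : (∫ x in (0:ℝ)..(2*Real.pi), (f x + t * g x)^2)
        = B * (t*t) + (2*C) * t + A := by
      rw [hfun, intervalIntegral.integral_add (f := fun x => (t*t) * (g x)^2 + (2*t) * (f x * g x)) (g := fun x => (f x)^2)
            (((continuous_const.mul (hg.pow 2)).add
              (continuous_const.mul (hf.mul hg))).intervalIntegrable 0 (2*Real.pi))
            ((hf.pow 2).intervalIntegrable 0 (2*Real.pi)),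
          intervalIntegral.integral_add (f := fun x => (t*t) * (g x)^2) (g := fun x => (2*t) * (f x * g x))
            ((continuous_const.mul (hg.pow 2)).intervalIntegrable 0 (2*Real.pi))
            ((continuous_const.mul (hf.mul hg)).intervalIntegrable 0 (2*Real.pi)),
          intervalIntegral.integral_const_mul, intervalIntegral.integral_const_mul]
      rw [← hA, ← hB, ← hC]; ring
    rw [← hexp]
    exact intervalIntegral.integral_nonneg (le_of_lt pi2_pos) (fun x _ => sq_nonneg _)
  have hd := discrim_le_zero hq
  rw [discrim] at hd
  have hC2 : C^2 ≤ A * B := by nlinarith [hd]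
  calc C ≤ |C| := le_abs_self C
    _ = Real.sqrt (C^2) := (Real.sqrt_sq_eq_abs C).symm
    _ ≤ Real.sqrt (A*B) := Real.sqrt_le_sqrt hC2
    _ = Real.sqrt A * Real.sqrt B := Real.sqrt_mul hA0 B
    _ = L2norm f * L2norm g := rfl

lemma cs_abs {f g : ℝ → ℝ} (hf : Continuous f) (hg : Continuous g) :
    (∫ x in (0:ℝ)..(2*Real.pi), |f x| * |g x|) ≤ L2norm f * L2norm g := by
  have h := cs_core hf.abs hg.abs
  have e1 : L2norm (fun x => |f x|) = L2norm f := by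
    unfold L2norm; congr 1; apply intervalIntegral.integral_congr; intro x _; exact sq_abs _
  have e2 : L2norm (fun x => |g x|) = L2norm g := by
    unfold L2norm; congr 1; apply intervalIntegral.integral_congr; intro x _; exact sq_abs _
  rw [e1, e2] at h
  exact h

lemma L2norm_nonneg (f : ℝ → ℝ) : 0 ≤ L2norm f := Real.sqrt_nonneg _

lemma L2norm_sq (f : ℝ → ℝ) :
    (L2norm f)^2 = ∫ x in (0:ℝ)..(2*Real.pi), (f x)^2 :=
  Real.sq_sqrt (intervalIntegral.integral_nonneg (le_of_lt pi2_pos) (fun x _ => sq_nonneg _))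

lemma le_supNorm {f : ℝ → ℝ} (hf : Continuous f) {x : ℝ}
    (hx : x ∈ Set.Icc (0:ℝ) (2*Real.pi)) : |f x| ≤ supNorm f :=
  le_csSup ((isCompact_Icc).bddAbove_image (hf.abs.continuousOn)) ⟨x, hx, rfl⟩

lemma supNorm_nonneg {f : ℝ → ℝ} (hf : Continuous f) : 0 ≤ supNorm f :=
  le_trans (abs_nonneg _) (le_supNorm hf ⟨le_rfl, le_of_lt pi2_pos⟩)

lemma supNorm_le {f : ℝ → ℝ} {c : ℝ}
    (h : ∀ x ∈ Set.Icc (0:ℝ) (2*Real.pi), |f x| ≤ c) : supNorm f ≤ c :=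
  csSup_le (by
    refine ⟨|f 0|, 0, ⟨le_rfl, le_of_lt pi2_pos⟩, rfl⟩)
    (by rintro y ⟨x, hx, rfl⟩; exact h x hx)

/-- A continuous function with zero integral has a zero in `[0, 2π]`. -/
lemma exists_zero {f : ℝ → ℝ} (hf : Continuous f)
    (hint : (∫ x in (0:ℝ)..(2*Real.pi), f x) = 0) :
    ∃ x ∈ Set.Icc (0:ℝ) (2*Real.pi), f x = 0 := by
  by_contra hno
  push_neg at hno
  have key : ∀ g : ℝ → ℝ, Continuous g → (∀ x ∈ Set.Icc (0:ℝ) (2*Real.pi), g x ≠ 0) →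
      0 < g 0 → 0 < ∫ x in (0:ℝ)..(2*Real.pi), g x := by
    intro g hg hgz hg0
    have hpos : ∀ x ∈ Set.Icc (0:ℝ) (2*Real.pi), 0 < g x := by
      intro x hx
      by_contra hle
      push_neg at hle
      have h0 : (0:ℝ) ∈ Set.uIcc (g 0) (g x) := by
        rcases lt_or_eq_of_le hle with h | h
        · exact Set.mem_uIcc.mpr (Or.inr ⟨le_of_lt h, le_of_lt hg0⟩)
        · exact absurd h (hgz x hx)
      obtain ⟨y, hy, hgy⟩ := intermediate_value_uIcc (hg.continuousOn (s := Set.uIcc 0 x)) h0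
      have hy' : y ∈ Set.Icc (0:ℝ) (2*Real.pi) := by
        have : Set.uIcc (0:ℝ) x ⊆ Set.Icc (0:ℝ) (2*Real.pi) := by
          rw [Set.uIcc_of_le hx.1]
          exact Set.Icc_subset_Icc le_rfl hx.2
        exact this hy
      exact hgz y hy' hgy
    exact intervalIntegral.intervalIntegral_pos_of_pos_on
      (hg.intervalIntegrable 0 (2*Real.pi))
      (fun x hx => hpos x ⟨le_of_lt hx.1, le_of_lt hx.2⟩) pi2_pos
  have h00 : f 0 ≠ 0 := hno 0 ⟨le_rfl, le_of_lt pi2_pos⟩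
  rcases lt_or_gt_of_ne h00 with h | h
  · have := key (fun x => -f x) hf.neg (fun x hx => neg_ne_zero.mpr (hno x hx))
      (by simpa using h)
    rw [intervalIntegral.integral_neg, hint] at this
    simp at this
  · have := key f hf hno h
    rw [hint] at this
    exact lt_irrefl 0 this


lemma agmon {f f' : ℝ → ℝ} (hder : ∀ x, HasDerivAt f (f' x) x)
    (hf : Continuous f) (hf' : Continuous f')
    (hzero : ∃ x₀ ∈ Set.Icc (0:ℝ) (2*Real.pi), f x₀ = 0) :
    (supNorm f)^2 ≤ 2 * (L2norm f * L2norm f') := by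
  obtain ⟨x₀, hx₀, hfx₀⟩ := hzero
  set h : ℝ → ℝ := fun t => 2 * (f t * f' t) with hh
  set ha : ℝ → ℝ := fun t => |h t| with hha
  have h2c : Continuous h := continuous_const.mul (hf.mul hf')
  have hac : Continuous ha := h2c.abs
  have hkey : ∀ x ∈ Set.Icc (0:ℝ) (2*Real.pi), (f x)^2 ≤ 2 * (L2norm f * L2norm f') := by
    intro x hx
    have hsq : ∀ t : ℝ, HasDerivAt (fun y => (f y)^2) (h t) t := by
      intro t
      have h1 : HasDerivAt (fun y => f y * f y) (f' t * f t + f t * f' t) t := (hder t).mul (hder t)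
      have he : (fun y => (f y)^2) = fun y => f y * f y := by funext y; ring
      rw [he, hh]
      convert h1 using 1
      ring
    have hfact : (f x)^2 - (f x₀)^2 = ∫ t in x₀..x, h t := by
      rw [intervalIntegral.integral_eq_sub_of_hasDerivAt (fun t _ => hsq t)
        (h2c.intervalIntegrable _ _)]
    have h1 : |∫ t in x₀..x, h t| ≤ |∫ t in x₀..x, ha t| := by
      simpa [Real.norm_eq_abs] using
        intervalIntegral.norm_integral_le_abs_integral_norm
          (f := h) (a := x₀) (b := x) (μ := volume)
    have h2 : |∫ t in x₀..x, ha t| ≤ |∫ t in (0:ℝ)..(2*Real.pi), ha t| := by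
      apply intervalIntegral.abs_integral_mono_interval
      · rw [Set.uIoc_of_le (le_of_lt pi2_pos), Set.uIoc]
        exact Set.Ioc_subset_Ioc (le_min hx₀.1 hx.1) (max_le hx₀.2 hx.2)
      · exact Filter.Eventually.of_forall (fun t => abs_nonneg _)
      · exact hac.intervalIntegrable _ _
    have h3 : |∫ t in (0:ℝ)..(2*Real.pi), ha t| = ∫ t in (0:ℝ)..(2*Real.pi), ha t :=
      abs_of_nonneg (intervalIntegral.integral_nonneg (le_of_lt pi2_pos)
        (fun t _ => abs_nonneg _))
    have h4 : (∫ t in (0:ℝ)..(2*Real.pi), ha t) ≤ 2 * (L2norm f * L2norm f') := by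
      have he : ha = fun t => 2 * (|f t| * |f' t|) := by
        funext t
        rw [hha]
        simp only [hh]
        rw [abs_mul, abs_mul]
        norm_num
      rw [he, intervalIntegral.integral_const_mul]
      have := cs_abs hf hf'
      linarith
    have h5 : (f x)^2 ≤ |∫ t in x₀..x, h t| := by
      calc (f x)^2 = (f x)^2 - (f x₀)^2 := by rw [hfx₀]; ring
        _ ≤ |(f x)^2 - (f x₀)^2| := le_abs_self _
        _ = |∫ t in x₀..x, h t| := by rw [hfact]
    linarith
  have hS : supNorm f ≤ Real.sqrt (2 * (L2norm f * L2norm f')) := by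
    apply supNorm_le
    intro x hx
    rw [← Real.sqrt_sq_eq_abs]
    exact Real.sqrt_le_sqrt (hkey x hx)
  have hnn : 0 ≤ 2 * (L2norm f * L2norm f') := by
    have h0 := L2norm_nonneg f; have h1 := L2norm_nonneg f'; positivity
  calc (supNorm f)^2 ≤ (Real.sqrt (2 * (L2norm f * L2norm f')))^2 :=
        pow_le_pow_left₀ (supNorm_nonneg hf) hS 2
    _ = 2 * (L2norm f * L2norm f') := Real.sq_sqrt hnn

/-- Weighted AM–GM step: `T⁸ ≤ 16 X¹⁴ Y¹⁰ → T ≤ X²/4 + (7⁷/64) Y¹⁰`. -/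
lemma amgm {T X Y : ℝ} (hT : 0 ≤ T) (hX : 0 ≤ X) (hY : 0 ≤ Y)
    (h : T^8 ≤ 16 * X^14 * Y^10) :
    T ≤ 1/4 * X^2 + 7^7/64 * Y^10 := by
  set u : ℝ := X^2/28 with hu
  set v : ℝ := 7^7/64 * Y^10 with hv
  have hu0 : 0 ≤ u := by positivity
  have hv0 : 0 ≤ v := by positivity
  have hgm : u ^ (7/8 : ℝ) * v ^ (1/8 : ℝ) ≤ 7/8 * u + 1/8 * v :=
    Real.geom_mean_le_arith_mean2_weighted (by norm_num) (by norm_num) hu0 hv0 (by norm_num)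
  have hpow : u^7 * v = (u ^ (7/8:ℝ) * v ^ (1/8:ℝ))^8 := by
    rw [mul_pow, ← Real.rpow_natCast (u ^ (7/8:ℝ)) 8, ← Real.rpow_natCast (v ^ (1/8:ℝ)) 8,
      ← Real.rpow_mul hu0, ← Real.rpow_mul hv0]
    have e1 : (7/8:ℝ) * (8:ℕ) = ((7:ℕ):ℝ) := by norm_num
    have e2 : (1/8:ℝ) * (8:ℕ) = ((1:ℕ):ℝ) := by norm_num
    rw [e1, e2, Real.rpow_natCast, Real.rpow_natCast, pow_one]
  have h8 : u^7 * v ≤ (7/8 * u + 1/8 * v)^8 := by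
    rw [hpow]
    exact pow_le_pow_left₀ (by positivity) hgm 8
  have hconst : 16 * X^14 * Y^10 = 8^8 * (u^7 * v) := by
    rw [hu, hv]; ring
  have hT8 : T^8 ≤ (7 * u + v)^8 := by
    calc T^8 ≤ 16 * X^14 * Y^10 := h
      _ = 8^8 * (u^7*v) := hconst
      _ ≤ 8^8 * (7/8 * u + 1/8 * v)^8 := by
          have := h8; nlinarith [h8]
      _ = (7*u + v)^8 := by ring
  have hfin : T ≤ 7*u + v := by
    refine le_of_pow_le_pow_left₀ (by norm_num) (by positivity) hT8
  calc T ≤ 7*u + v := hfin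
    _ = 1/4 * X^2 + 7^7/64 * Y^10 := by rw [hu, hv]; ring

/-- Final numeric combination. -/
lemma final {X Y Z W M S : ℝ} (hX : 0 ≤ X) (hY : 0 ≤ Y) (hZ : 0 ≤ Z)
    (hW : 0 ≤ W) (hM : 0 ≤ M) (hS : 0 ≤ S)
    (h1 : Z^2 ≤ X*Y) (h2 : S^2 ≤ 2*(Z*X)) (h3 : Y ≤ Z) (h4 : Z ≤ X) :
    -X^2 + M*Z^2 + 2*(M*(X*Y)) + S*Z^2 + X*W
      ≤ 7^7/4 * Y^10 + (9*M^2 - 1/4)*Y^2 + W^2 := by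
  have hSZ : S*Z^2 ≤ 1/4 * X^2 + 7^7/64 * Y^10 := by
    apply amgm (by positivity) hX hY
    have e : (S*Z^2)^8 = (S^2)^4 * (Z^2)^8 := by ring
    calc (S*Z^2)^8 = (S^2)^4 * (Z^2)^8 := e
      _ ≤ (2*(Z*X))^4 * (X*Y)^8 := by
          apply mul_le_mul (pow_le_pow_left₀ (sq_nonneg S) h2 4)
            (pow_le_pow_left₀ (sq_nonneg Z) h1 8) (by positivity) (by positivity)
      _ = 16 * (Z^2)^2 * (X^4 * (X*Y)^8) := by ring
      _ ≤ 16 * (X*Y)^2 * (X^4 * (X*Y)^8) := by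
          have h5 := pow_le_pow_left₀ (sq_nonneg Z) h1 2
          have h6 : (0:ℝ) ≤ X^4 * (X*Y)^8 := by positivity
          nlinarith [mul_le_mul_of_nonneg_right h5 h6]
      _ = 16 * X^14 * Y^10 := by ring
  have hMZ : M*Z^2 ≤ M*(X*Y) := mul_le_mul_of_nonneg_left h1 hM
  have h3M : 3*(M*(X*Y)) ≤ 1/4 * X^2 + 9*M^2*Y^2 := by nlinarith [sq_nonneg (1/2*X - 3*M*Y)]
  have hXW : X*W ≤ 1/4 * X^2 + W^2 := by nlinarith [sq_nonneg (1/2*X - W)]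
  have hYX : Y^2 ≤ X^2 := by nlinarith
  have hY10 : (0:ℝ) ≤ Y^10 := by positivity
  linarith


lemma pi2_pos' : (0:ℝ) < 0 + 2*Real.pi := by simpa using pi2_pos

/-- Parseval on `[0, 2π]` for (complexified) continuous periodic real functions. -/
lemma parseval {g : ℝ → ℝ} (hg : Continuous g)
    (hper : Function.Periodic g (2*Real.pi)) :
    Summable (fun n : ℤ => ‖fourierCoeffOn pi2_pos' (fun x => (g x : ℂ)) n‖^2) ∧
      (∑' n : ℤ, ‖fourierCoeffOn pi2_pos' (fun x => (g x : ℂ)) n‖^2)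
        = (1/(2*Real.pi)) * ∫ x in (0:ℝ)..(2*Real.pi), (g x)^2 := by
  haveI : Fact (0 < 2*Real.pi) := ⟨pi2_pos⟩
  set gC : ℝ → ℂ := fun x => (g x : ℂ) with hgC
  have hgCc : Continuous gC := Complex.continuous_ofReal.comp hg
  have hperC : Function.Periodic gC (2*Real.pi) := fun x => by simp [hgC, hper x]
  have h0T : gC 0 = gC (2*Real.pi) := by
    have := hperC 0; rw [zero_add] at this; exact this.symm
  have hGc : Continuous (AddCircle.liftIco (2*Real.pi) 0 gC) :=
    AddCircle.liftIco_zero_continuous h0T hgCc.continuousOn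
  set G : C(AddCircle (2*Real.pi), ℂ) := ⟨AddCircle.liftIco (2*Real.pi) 0 gC, hGc⟩ with hGdef
  have hGcoe : ∀ x : ℝ, G ((x : ℝ) : AddCircle (2*Real.pi)) = gC x := by
    intro x
    obtain ⟨b, hb, hbe⟩ := AddCircle.eq_coe_Ico ((x : ℝ) : AddCircle (2*Real.pi))
    have hb' : b ∈ Set.Ico (0:ℝ) (0 + 2*Real.pi) := by simpa [zero_add] using hb
    have h1 : G ((b : ℝ) : AddCircle (2*Real.pi)) = gC b := by
      show AddCircle.liftIco (2*Real.pi) 0 gC _ = _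
      exact AddCircle.liftIco_coe_apply hb'
    have h3 : gC b = gC x := by
      have h2 : ((b : ℝ) : AddCircle (2*Real.pi)) = ((x : ℝ) : AddCircle (2*Real.pi)) := hbe
      have h4 : b - x ∈ AddSubgroup.zmultiples (2*Real.pi) :=
        (QuotientAddGroup.eq_iff_sub_mem).mp h2
      obtain ⟨k, hk⟩ := (AddSubgroup.mem_zmultiples_iff).mp h4
      have : x = b - k • (2*Real.pi) := by
        rw [hk]; ring
      rw [this, hperC.sub_zsmul_eq k]
    rw [← hbe, h1, h3]
  set Glp := ContinuousMap.toLp (E := ℂ) 2 AddCircle.haarAddCircle ℂ G with hGlp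
  have hae : (↑↑Glp : AddCircle (2*Real.pi) → ℂ) =ᵐ[AddCircle.haarAddCircle] ⇑G :=
    ContinuousMap.coeFn_toLp (p := 2) AddCircle.haarAddCircle (𝕜 := ℂ) G
  have hcoeff : ∀ n : ℤ, fourierCoeff (↑↑Glp : AddCircle (2*Real.pi) → ℂ) n
      = fourierCoeffOn pi2_pos' gC n := by
    intro n
    have h1 : fourierCoeff (⇑G) n = fourierCoeffOn pi2_pos' gC n := by
      rw [hGdef]
      exact fourierCoeff_liftIco_eq gC n
    rw [← h1]
    unfold fourierCoeff
    apply integral_congr_ae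
    filter_upwards [hae] with t ht
    rw [ht]
  constructor
  · have h := (lp.memℓp (fourierBasis.repr Glp)).summable
      (p := (2:ENNReal)) (by norm_num)
    apply h.congr
    intro i
    rw [fourierBasis_repr, hcoeff i,
      show ((2:ENNReal).toReal) = ((2:ℕ):ℝ) by norm_num, Real.rpow_natCast]
  · have hpars := tsum_sq_fourierCoeff Glp
    have hL : (∑' n : ℤ, ‖fourierCoeff (↑↑Glp : AddCircle (2*Real.pi) → ℂ) n‖^2)
        = ∑' n : ℤ, ‖fourierCoeffOn pi2_pos' gC n‖^2 := by
      apply tsum_congr; intro n; rw [hcoeff n]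
    have hR1 : (∫ t : AddCircle (2*Real.pi), ‖(↑↑Glp : AddCircle (2*Real.pi) → ℂ) t‖^2
          ∂AddCircle.haarAddCircle)
        = ∫ t : AddCircle (2*Real.pi), ‖G t‖^2 ∂AddCircle.haarAddCircle := by
      apply integral_congr_ae
      filter_upwards [hae] with t ht
      rw [ht]
    have hvol : (∫ x in (0:ℝ)..(0 + 2*Real.pi), ‖G ((x : ℝ) : AddCircle (2*Real.pi))‖^2)
        = ∫ t : AddCircle (2*Real.pi), ‖G t‖^2 ∂(volume) :=
      AddCircle.intervalIntegral_preimage (2*Real.pi) 0 (fun t => ‖G t‖^2)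
    rw [AddCircle.volume_eq_smul_haarAddCircle, integral_smul_measure,
      ENNReal.toReal_ofReal (le_of_lt pi2_pos), smul_eq_mul] at hvol
    have hint : (∫ x in (0:ℝ)..(0 + 2*Real.pi), ‖G ((x : ℝ) : AddCircle (2*Real.pi))‖^2)
        = ∫ x in (0:ℝ)..(2*Real.pi), (g x)^2 := by
      rw [zero_add]
      apply intervalIntegral.integral_congr
      intro x _
      show ‖G ((x:ℝ) : AddCircle (2*Real.pi))‖^2 = (g x)^2
      rw [hGcoe x]
      simp only [hgC, Complex.norm_real, Real.norm_eq_abs]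
      exact sq_abs _
    rw [hL, hR1] at hpars
    rw [hpars]
    rw [← hint, hvol]
    field_simp

/-- Wirtinger's inequality on `[0,2π]` for zero-mean periodic `C¹` functions. -/
lemma wirtinger {u u' : ℝ → ℝ} (hu : ∀ x, HasDerivAt u (u' x) x)
    (hcu : Continuous u) (hcu' : Continuous u')
    (hperu : Function.Periodic u (2*Real.pi)) (hperu' : Function.Periodic u' (2*Real.pi))
    (hmean : (∫ x in (0:ℝ)..(2*Real.pi), u x) = 0) :
    (∫ x in (0:ℝ)..(2*Real.pi), (u x)^2) ≤ ∫ x in (0:ℝ)..(2*Real.pi), (u' x)^2 := by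
  haveI : Fact (0 < 2*Real.pi) := ⟨pi2_pos⟩
  set c : ℤ → ℂ := fourierCoeffOn pi2_pos' (fun x => (u x : ℂ)) with hc
  set c' : ℤ → ℂ := fourierCoeffOn pi2_pos' (fun x => (u' x : ℂ)) with hc'
  obtain ⟨hsum_u, heq_u⟩ := parseval hcu hperu
  obtain ⟨hsum_u', heq_u'⟩ := parseval hcu' hperu'
  -- zeroth coefficient vanishes
  have hc0 : c 0 = 0 := by
    rw [hc, fourierCoeffOn_eq_integral]
    simp only [neg_zero, fourier_zero, one_smul, sub_zero, zero_add]
    rw [intervalIntegral.integral_ofReal, hmean]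
    simp
  -- coefficient relation for n ≠ 0
  have hrel : ∀ n : ℤ, n ≠ 0 → ‖c n‖ ≤ ‖c' n‖ := by
    intro n hn
    have hder := fourierCoeffOn_of_hasDerivAt pi2_pos' hn
      (f := fun x => (u x : ℂ)) (f' := fun x => (u' x : ℂ))
      (fun x _ => (hu x).ofReal_comp)
      ((Complex.continuous_ofReal.comp hcu').intervalIntegrable _ _)
    have hbdry : ((u (0 + 2*Real.pi) : ℂ)) - ((u 0 : ℂ)) = 0 := by
      rw [zero_add]
      have := hperu 0; rw [zero_add] at this
      rw [this, sub_self]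
    rw [hbdry, mul_zero, zero_sub] at hder
    have hne : ((n:ℂ)) ≠ 0 := Int.cast_ne_zero.mpr hn
    have hpine : ((Real.pi:ℂ)) ≠ 0 := Complex.ofReal_ne_zero.mpr Real.pi_ne_zero
    have hB : (((0 + 2*Real.pi : ℝ)) : ℂ) - (((0:ℝ)) : ℂ) = 2*(Real.pi:ℂ) := by
      push_cast; ring
    rw [hB] at hder
    rw [← hc, ← hc'] at hder
    have hgen : ∀ z w : ℂ, w = 1/(-2*(Real.pi:ℂ)*Complex.I*(n:ℂ)) * -(2*(Real.pi:ℂ) * z) →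
        Complex.I * (n:ℂ) * w = z := by
      intro z w h
      rw [h]
      have hIne := Complex.I_ne_zero
      field_simp
    have hcn : Complex.I * (n:ℂ) * c n = c' n := hgen (c' n) (c n) hder
    have h1 : ‖c' n‖ = |(n:ℝ)| * ‖c n‖ := by
      rw [← hcn]
      rw [norm_mul, norm_mul, Complex.norm_I, one_mul, Complex.norm_intCast]
    have h2 : (1:ℝ) ≤ |(n:ℝ)| := by
      rw [← Int.cast_abs]
      exact_mod_cast Int.one_le_abs (by omega)
    calc ‖c n‖ = 1 * ‖c n‖ := (one_mul _).symm
      _ ≤ |(n:ℝ)| * ‖c n‖ := by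
          apply mul_le_mul_of_nonneg_right h2 (norm_nonneg _)
      _ = ‖c' n‖ := h1.symm
  have hterm : ∀ n : ℤ, ‖c n‖^2 ≤ ‖c' n‖^2 := by
    intro n
    by_cases hn : n = 0
    · rw [hn, hc0]; simp [sq_nonneg]
    · exact pow_le_pow_left₀ (norm_nonneg _) (hrel n hn) 2
  have hts : (∑' n : ℤ, ‖c n‖^2) ≤ ∑' n : ℤ, ‖c' n‖^2 :=
    Summable.tsum_le_tsum hterm
      (Summable.of_nonneg_of_le (fun n => sq_nonneg _) hterm hsum_u') hsum_u'
  rw [heq_u, heq_u'] at hts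
  have hpos : (0:ℝ) < 1/(2*Real.pi) := by positivity
  exact (mul_le_mul_iff_right₀ hpos).mp hts

lemma per_val {f : ℝ → ℝ} (h : Function.Periodic f (2*Real.pi)) :
    f (2*Real.pi) = f 0 := by
  have := h 0; rwa [zero_add] at this

lemma L2norm_sq' (f : ℝ → ℝ) :
    (L2norm f)^2 = ∫ x in (0:ℝ)..(2*Real.pi), f x * f x := by
  rw [L2norm_sq]
  apply intervalIntegral.integral_congr
  intro x _
  exact pow_two (f x)

lemma core {d1 d2 d3 d4 φ1 φ2 w w' : ℝ → ℝ}
    (sm1 : ContDiff ℝ (⊤ : ℕ∞) d1) (smφ1 : ContDiff ℝ (⊤ : ℕ∞) φ1)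
    (hder1 : ∀ x, HasDerivAt d1 (d2 x) x) (hder2 : ∀ x, HasDerivAt d2 (d3 x) x)
    (hder3 : ∀ x, HasDerivAt d3 (d4 x) x) (hderφ : ∀ x, HasDerivAt φ1 (φ2 x) x)
    (hderw : ∀ x, HasDerivAt w (w' x) x)
    (c1 : Continuous d1) (c2 : Continuous d2) (c3 : Continuous d3) (c4 : Continuous d4)
    (cφ1 : Continuous φ1) (cφ2 : Continuous φ2) (cw : Continuous w) (cw' : Continuous w')
    (p1 : Function.Periodic d1 (2*Real.pi)) (p2 : Function.Periodic d2 (2*Real.pi))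
    (p3 : Function.Periodic d3 (2*Real.pi)) (pφ1 : Function.Periodic φ1 (2*Real.pi))
    (pw : Function.Periodic w (2*Real.pi))
    (m1 : (∫ x in (0:ℝ)..(2*Real.pi), d1 x) = 0)
    (m2 : (∫ x in (0:ℝ)..(2*Real.pi), d2 x) = 0) :
    (∫ x in (0:ℝ)..(2*Real.pi),
        d2 x * (d4 x + 2 * iteratedDeriv 2 (fun y => d1 y * φ1 y) x))
      + (∫ x in (0:ℝ)..(2*Real.pi), d2 x * iteratedDeriv 2 (fun y => (d1 y)^2) x)
      + (∫ x in (0:ℝ)..(2*Real.pi), d2 x * w' x)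
    ≤ 7^7/4 * (L2norm d1)^10 + (9 * (supNorm φ2)^2 - 1/4) * (L2norm d1)^2
      + (L2norm w)^2 := by
  have ii : ∀ {h : ℝ → ℝ}, Continuous h → IntervalIntegrable h volume 0 (2*Real.pi) :=
    fun hc => hc.intervalIntegrable 0 (2*Real.pi)
  -- the function g = d1 φ1
  set g : ℝ → ℝ := fun y => d1 y * φ1 y with hgdef
  have hgs : ContDiff ℝ (⊤ : ℕ∞) g := sm1.mul smφ1
  have hdg : deriv g = fun x => d2 x * φ1 x + d1 x * φ2 x :=
    funext fun x => ((hder1 x).mul (hderφ x)).deriv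
  have hdgc : Continuous (deriv g) := (smooth_deriv hgs).continuous
  have hi2g : ∀ x, HasDerivAt (deriv g) (iteratedDeriv 2 g x) x := by
    intro x
    have h := hasDerivAt_iter hgs 1 x
    rwa [iteratedDeriv_one] at h
  have ci2g : Continuous (iteratedDeriv 2 g) := (smooth_iter hgs 2).continuous
  have pg : Function.Periodic g (2*Real.pi) := p1.mul pφ1
  have pdg : Function.Periodic (deriv g) (2*Real.pi) := periodic_deriv pg
  -- the function h = d1^2
  have hsqfn : (fun y => (d1 y)^2) = fun y => d1 y * d1 y := funext fun y => pow_two (d1 y)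
  set q : ℝ → ℝ := fun y => d1 y * d1 y with hqdef
  have hqs : ContDiff ℝ (⊤ : ℕ∞) q := sm1.mul sm1
  have hdq : deriv q = fun x => d2 x * d1 x + d1 x * d2 x :=
    funext fun x => ((hder1 x).mul (hder1 x)).deriv
  have hdqc : Continuous (deriv q) := (smooth_deriv hqs).continuous
  have hi2q : ∀ x, HasDerivAt (deriv q) (iteratedDeriv 2 q x) x := by
    intro x
    have h := hasDerivAt_iter hqs 1 x
    rwa [iteratedDeriv_one] at h
  have ci2q : Continuous (iteratedDeriv 2 q) := (smooth_iter hqs 2).continuous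
  have pq : Function.Periodic q (2*Real.pi) := p1.mul p1
  have pdq : Function.Periodic (deriv q) (2*Real.pi) := periodic_deriv pq
  -- IBP identities
  have E1A : (∫ x in (0:ℝ)..(2*Real.pi), d2 x * d4 x)
      = -(∫ x in (0:ℝ)..(2*Real.pi), d3 x * d3 x) :=
    ibp hder2 hder3 c2 c3 c3 c4 (by rw [per_val p2, per_val p3])
  have E2 : (∫ x in (0:ℝ)..(2*Real.pi), d2 x * iteratedDeriv 2 g x)
      = - ∫ x in (0:ℝ)..(2*Real.pi), d3 x * deriv g x :=
    ibp hder2 hi2g c2 hdgc c3 ci2g (by rw [per_val p2, per_val pdg])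
  have E2b : (∫ x in (0:ℝ)..(2*Real.pi), d3 x * deriv g x)
      = (∫ x in (0:ℝ)..(2*Real.pi), d3 x * (d2 x * φ1 x))
        + (∫ x in (0:ℝ)..(2*Real.pi), d3 x * (d1 x * φ2 x)) := by
    rw [← intervalIntegral.integral_add (f := fun x => d3 x * (d2 x * φ1 x)) (g := fun x => d3 x * (d1 x * φ2 x)) (ii (c3.mul (c2.mul cφ1)))
      (ii (c3.mul (c1.mul cφ2)))]
    apply intervalIntegral.integral_congr
    intro x _
    simp only [hdg]
    ring
  have E2c : (∫ x in (0:ℝ)..(2*Real.pi), (d2 x * d2 x) * φ2 x)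
      = - ∫ x in (0:ℝ)..(2*Real.pi), (d3 x * d2 x + d2 x * d3 x) * φ1 x :=
    ibp (fun x => (hder2 x).mul (hder2 x)) hderφ (c2.mul c2) cφ1
      ((c3.mul c2).add (c2.mul c3)) cφ2 (by rw [per_val p2, per_val pφ1])
  have E2d : (∫ x in (0:ℝ)..(2*Real.pi), d3 x * (d2 x * φ1 x))
      = -(1/2) * ∫ x in (0:ℝ)..(2*Real.pi), (d2 x * d2 x) * φ2 x := by
    have h1 : (∫ x in (0:ℝ)..(2*Real.pi), d3 x * (d2 x * φ1 x))
        = (1/2) * ∫ x in (0:ℝ)..(2*Real.pi), (d3 x * d2 x + d2 x * d3 x) * φ1 x := by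
      rw [← intervalIntegral.integral_const_mul]
      apply intervalIntegral.integral_congr
      intro x _
      ring
    rw [h1]
    linarith [E2c]
  -- C-term
  have E3 : (∫ x in (0:ℝ)..(2*Real.pi), d2 x * iteratedDeriv 2 q x)
      = - ∫ x in (0:ℝ)..(2*Real.pi), d3 x * deriv q x :=
    ibp hder2 hi2q c2 hdqc c3 ci2q (by rw [per_val p2, per_val pdq])
  have E3b : (∫ x in (0:ℝ)..(2*Real.pi), (d2 x * d2 x) * d2 x)
      = - ∫ x in (0:ℝ)..(2*Real.pi), (d3 x * d2 x + d2 x * d3 x) * d1 x :=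
    ibp (fun x => (hder2 x).mul (hder2 x)) hder1 (c2.mul c2) c1
      ((c3.mul c2).add (c2.mul c3)) c2 (by rw [per_val p2, per_val p1])
  have E3c : (∫ x in (0:ℝ)..(2*Real.pi), d3 x * deriv q x)
      = ∫ x in (0:ℝ)..(2*Real.pi), (d3 x * d2 x + d2 x * d3 x) * d1 x := by
    apply intervalIntegral.integral_congr
    intro x _
    simp only [hdq]
    ring
  have E3fin : (∫ x in (0:ℝ)..(2*Real.pi), d2 x * iteratedDeriv 2 q x)
      = ∫ x in (0:ℝ)..(2*Real.pi), (d2 x * d2 x) * d2 x := by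
    rw [E3, E3c, E3b]
  -- w-term
  have E4 : (∫ x in (0:ℝ)..(2*Real.pi), d2 x * w' x)
      = -(∫ x in (0:ℝ)..(2*Real.pi), d3 x * w x) :=
    ibp hder2 hderw c2 cw c3 cw' (by rw [per_val p2, per_val pw])
  -- splitting of the first integral
  have T1 : (∫ x in (0:ℝ)..(2*Real.pi), d2 x * (d4 x + 2 * iteratedDeriv 2 g x))
      = (∫ x in (0:ℝ)..(2*Real.pi), d2 x * d4 x)
        + 2 * ∫ x in (0:ℝ)..(2*Real.pi), d2 x * iteratedDeriv 2 g x := by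
    rw [← intervalIntegral.integral_const_mul, ← intervalIntegral.integral_add (f := fun x => d2 x * d4 x) (g := fun x => 2 * (d2 x * iteratedDeriv 2 g x))
      (ii (c2.mul c4)) (ii (continuous_const.mul (c2.mul ci2g)))]
    apply intervalIntegral.integral_congr
    intro x _
    ring
  -- numbers
  set X : ℝ := L2norm d3 with hX
  set Y : ℝ := L2norm d1 with hY
  set Z : ℝ := L2norm d2 with hZ
  set Wn : ℝ := L2norm w with hWn
  set M : ℝ := supNorm φ2 with hM
  set S : ℝ := supNorm d2 with hS
  have hX0 : 0 ≤ X := L2norm_nonneg d3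
  have hY0 : 0 ≤ Y := L2norm_nonneg d1
  have hZ0 : 0 ≤ Z := L2norm_nonneg d2
  have hW0 : 0 ≤ Wn := L2norm_nonneg w
  have hM0 : 0 ≤ M := supNorm_nonneg cφ2
  have hS0 : 0 ≤ S := supNorm_nonneg c2
  have ha : (∫ x in (0:ℝ)..(2*Real.pi), d3 x * d3 x) = X^2 := by
    rw [hX, L2norm_sq' d3]
  have hZsq : Z^2 = ∫ x in (0:ℝ)..(2*Real.pi), d2 x * d2 x := by
    rw [hZ, L2norm_sq' d2]
  -- bounds
  have hb2 : (∫ x in (0:ℝ)..(2*Real.pi), (d2 x * d2 x) * φ2 x) ≤ M * Z^2 := by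
    rw [hZsq, ← intervalIntegral.integral_const_mul]
    apply intervalIntegral.integral_mono_on (le_of_lt pi2_pos)
      (ii ((c2.mul c2).mul cφ2)) (ii (continuous_const.mul (c2.mul c2)))
    intro x hx
    have h1 : φ2 x ≤ M := le_trans (le_abs_self _) (le_supNorm cφ2 hx)
    have h2 : 0 ≤ d2 x * d2 x := mul_self_nonneg _
    calc (d2 x * d2 x) * φ2 x ≤ (d2 x * d2 x) * M := mul_le_mul_of_nonneg_left h1 h2
      _ = M * (d2 x * d2 x) := by ring
  have hq2 : -(∫ x in (0:ℝ)..(2*Real.pi), d3 x * (d1 x * φ2 x)) ≤ M * (X*Y) := by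
    rw [← intervalIntegral.integral_neg]
    have step : (∫ x in (0:ℝ)..(2*Real.pi), -(d3 x * (d1 x * φ2 x)))
        ≤ ∫ x in (0:ℝ)..(2*Real.pi), M * (|d3 x| * |d1 x|) := by
      apply intervalIntegral.integral_mono_on (le_of_lt pi2_pos)
        (ii (c3.mul (c1.mul cφ2)).neg) (ii (continuous_const.mul (c3.abs.mul c1.abs)))
      intro x hx
      calc -(d3 x * (d1 x * φ2 x)) ≤ |d3 x * (d1 x * φ2 x)| := neg_le_abs _
        _ = (|d3 x| * |d1 x|) * |φ2 x| := by rw [abs_mul, abs_mul]; ring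
        _ ≤ (|d3 x| * |d1 x|) * M := mul_le_mul_of_nonneg_left (le_supNorm cφ2 hx)
            (by positivity)
        _ = M * (|d3 x| * |d1 x|) := by ring
    calc (∫ x in (0:ℝ)..(2*Real.pi), -(d3 x * (d1 x * φ2 x)))
        ≤ ∫ x in (0:ℝ)..(2*Real.pi), M * (|d3 x| * |d1 x|) := step
      _ = M * ∫ x in (0:ℝ)..(2*Real.pi), |d3 x| * |d1 x| :=
          intervalIntegral.integral_const_mul M _
      _ ≤ M * (X*Y) := mul_le_mul_of_nonneg_left (cs_abs c3 c1) hM0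
  have hr2 : (∫ x in (0:ℝ)..(2*Real.pi), (d2 x * d2 x) * d2 x) ≤ S * Z^2 := by
    rw [hZsq, ← intervalIntegral.integral_const_mul]
    apply intervalIntegral.integral_mono_on (le_of_lt pi2_pos)
      (ii ((c2.mul c2).mul c2)) (ii (continuous_const.mul (c2.mul c2)))
    intro x hx
    have h1 : d2 x ≤ S := le_trans (le_abs_self _) (le_supNorm c2 hx)
    have h2 : 0 ≤ d2 x * d2 x := mul_self_nonneg _
    calc (d2 x * d2 x) * d2 x ≤ (d2 x * d2 x) * S := mul_le_mul_of_nonneg_left h1 h2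
      _ = S * (d2 x * d2 x) := by ring
  have hv2 : -(∫ x in (0:ℝ)..(2*Real.pi), d3 x * w x) ≤ X * Wn := by
    rw [← intervalIntegral.integral_neg]
    calc (∫ x in (0:ℝ)..(2*Real.pi), -(d3 x * w x))
        ≤ ∫ x in (0:ℝ)..(2*Real.pi), |d3 x| * |w x| := by
          apply intervalIntegral.integral_mono_on (le_of_lt pi2_pos)
            (ii (c3.mul cw).neg) (ii (c3.abs.mul cw.abs))
          intro x _
          calc -(d3 x * w x) ≤ |d3 x * w x| := neg_le_abs _
            _ = |d3 x| * |w x| := abs_mul _ _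
      _ ≤ X * Wn := cs_abs c3 cw
  have hZXY : Z^2 ≤ X*Y := by
    have e := ibp hder2 hder1 c2 c1 c3 c2 (by rw [per_val p2, per_val p1])
    rw [hZsq, e, ← intervalIntegral.integral_neg]
    calc (∫ x in (0:ℝ)..(2*Real.pi), -(d3 x * d1 x))
        ≤ ∫ x in (0:ℝ)..(2*Real.pi), |d3 x| * |d1 x| := by
          apply intervalIntegral.integral_mono_on (le_of_lt pi2_pos)
            (ii (c3.mul c1).neg) (ii (c3.abs.mul c1.abs))
          intro x _
          calc -(d3 x * d1 x) ≤ |d3 x * d1 x| := neg_le_abs _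
            _ = |d3 x| * |d1 x| := abs_mul _ _
      _ ≤ X * Y := cs_abs c3 c1
  have hS2 : S^2 ≤ 2*(Z*X) := agmon hder2 c2 c3 (exists_zero c2 m2)
  have hYZ : Y ≤ Z := by
    rw [hY, hZ]
    exact Real.sqrt_le_sqrt (wirtinger hder1 c1 c2 p1 p2 m1)
  have hZX : Z ≤ X := by
    rw [hZ, hX]
    exact Real.sqrt_le_sqrt (wirtinger hder2 c2 c3 p2 p3 m2)
  have hfin := final hX0 hY0 hZ0 hW0 hM0 hS0 hZXY hS2 hYZ hZX
  -- main rewriting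
  rw [hsqfn, T1, E1A, E2, E2b, E2d, E3fin, E4]
  linarith

end S15

/-- the combined worst-case differential-inequality bound:
⟨d_xx, d_xxxx + 2(d_x φ_x)_xx⟩ + ⟨d_xx, ((d_x)²)_xx⟩ + ⟨d_xx, w_x⟩
  ≤ (7⁷/4)‖d_x‖¹⁰ + (9‖φ_xx‖_∞² − 1/4)‖d_x‖² + ‖w‖². -/
theorem stmt15 (d φ w : ℝ → ℝ) (hd : InH d) (hφ : InH φ) (hw : InH w) :
    L2inner (iteratedDeriv 2 d)
        (fun x => iteratedDeriv 4 d x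
          + 2 * iteratedDeriv 2 (fun y => deriv d y * deriv φ y) x)
      + L2inner (iteratedDeriv 2 d) (iteratedDeriv 2 (fun x => (deriv d x)^2))
      + L2inner (iteratedDeriv 2 d) (deriv w)
    ≤ (7^7/4) * (L2norm (deriv d))^10
      + (9 * (supNorm (iteratedDeriv 2 φ))^2 - 1/4) * (L2norm (deriv d))^2
      + (L2norm w)^2 := by
  obtain ⟨hds, hdp, hdm⟩ := hd
  obtain ⟨hφs, hφp, hφm⟩ := hφ
  obtain ⟨hws, hwp, hwm⟩ := hw
  have sm1 : ContDiff ℝ (⊤ : ℕ∞) (deriv d) := S15.smooth_deriv hds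
  have smφ1 : ContDiff ℝ (⊤ : ℕ∞) (deriv φ) := S15.smooth_deriv hφs
  have hder1 : ∀ x, HasDerivAt (deriv d) (iteratedDeriv 2 d x) x := by
    intro x
    have h := S15.hasDerivAt_iter hds 1 x
    rwa [iteratedDeriv_one] at h
  have hder2 : ∀ x, HasDerivAt (iteratedDeriv 2 d) (iteratedDeriv 3 d x) x :=
    fun x => S15.hasDerivAt_iter hds 2 x
  have hder3 : ∀ x, HasDerivAt (iteratedDeriv 3 d) (iteratedDeriv 4 d x) x :=
    fun x => S15.hasDerivAt_iter hds 3 x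
  have hderφ : ∀ x, HasDerivAt (deriv φ) (iteratedDeriv 2 φ x) x := by
    intro x
    have h := S15.hasDerivAt_iter hφs 1 x
    rwa [iteratedDeriv_one] at h
  have hderw : ∀ x, HasDerivAt w (deriv w x) x := S15.smooth_hasDerivAt hws
  have c1 : Continuous (deriv d) := sm1.continuous
  have c2 : Continuous (iteratedDeriv 2 d) := (S15.smooth_iter hds 2).continuous
  have c3 : Continuous (iteratedDeriv 3 d) := (S15.smooth_iter hds 3).continuous
  have c4 : Continuous (iteratedDeriv 4 d) := (S15.smooth_iter hds 4).continuous
  have cφ1 : Continuous (deriv φ) := smφ1.continuous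
  have cφ2 : Continuous (iteratedDeriv 2 φ) := (S15.smooth_iter hφs 2).continuous
  have cw : Continuous w := hws.continuous
  have cw' : Continuous (deriv w) := (S15.smooth_deriv hws).continuous
  have p1 : Function.Periodic (deriv d) (2*Real.pi) := S15.periodic_deriv hdp
  have p2 : Function.Periodic (iteratedDeriv 2 d) (2*Real.pi) := S15.periodic_iter hdp 2
  have p3 : Function.Periodic (iteratedDeriv 3 d) (2*Real.pi) := S15.periodic_iter hdp 3
  have pφ1 : Function.Periodic (deriv φ) (2*Real.pi) := S15.periodic_deriv hφp
  have m1 : (∫ x in (0:ℝ)..(2*Real.pi), deriv d x) = 0 := by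
    rw [intervalIntegral.integral_eq_sub_of_hasDerivAt
      (fun x _ => S15.smooth_hasDerivAt hds x) (c1.intervalIntegrable _ _),
      S15.per_val hdp, sub_self]
  have m2 : (∫ x in (0:ℝ)..(2*Real.pi), iteratedDeriv 2 d x) = 0 := by
    rw [intervalIntegral.integral_eq_sub_of_hasDerivAt
      (fun x _ => hder1 x) (c2.intervalIntegrable _ _),
      S15.per_val p1, sub_self]
  simp only [L2inner]
  exact S15.core sm1 smφ1 hder1 hder2 hder3 hderφ hderw c1 c2 c3 c4 cφ1 cφ2 cw cw'
    p1 p2 p3 pφ1 hwp m1 m2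
end

section
/- Let d, φ, and w be smooth 2π-periodic functions with zero mean. Let λ̃ ∈ ℝ be such that ⟨d_xx, d_xxxx + 2(d_x φ_x)_xx⟩ ≤ λ̃ ‖d_x‖². Let δ ∈ (0,1) and ε_B, ε_C, ε_D > 0 with ε_B + ε_C + ε_D = 1. Then ⟨d_xx, d_xxxx + 2(d_x φ_x)_xx⟩ + ⟨d_xx, ((d_x)²)_xx⟩ + ⟨d_xx, w_x⟩ ≤ (1−δ) λ̃ ‖d_x‖² + (9δ/(4ε_B)) ‖φ_xx‖_∞² ‖d_x‖² + (7⁷/(4⁸ (δ ε_C)⁷)) ‖d_x‖^{10} + (1/(4δε_D)) ‖w‖². -/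
open MeasureTheory Real Filter

lemma periodic_deriv' {f : ℝ → ℝ} {c : ℝ} (h : Function.Periodic f c) :
    Function.Periodic (deriv f) c := fun x => by
  rw [← deriv_comp_add_const]
  congr 1
  ext y
  exact h y

lemma cd_deriv {f : ℝ → ℝ} (h : ContDiff ℝ (⊤ : ℕ∞) f) : ContDiff ℝ (⊤ : ℕ∞) (deriv f) :=
  (contDiff_infty_iff_deriv.mp h).2

lemma twopi_pos : (0:ℝ) < 2*Real.pi := by positivity

lemma intInt {f : ℝ → ℝ} (h : Continuous f) :
    IntervalIntegrable f volume 0 (2*Real.pi) := h.intervalIntegrable _ _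

/-- Integration by parts for periodic C^∞ functions. -/
lemma ibp {f g : ℝ → ℝ} (hf : ContDiff ℝ (⊤ : ℕ∞) f) (hg : ContDiff ℝ (⊤ : ℕ∞) g)
    (pf : Function.Periodic f (2*Real.pi)) (pg : Function.Periodic g (2*Real.pi)) :
    ∫ x in (0:ℝ)..(2*Real.pi), deriv f x * g x
      = - ∫ x in (0:ℝ)..(2*Real.pi), f x * deriv g x := by
  have hsum := intervalIntegral.integral_deriv_mul_eq_sub
    (u := f) (v := g) (u' := deriv f) (v' := deriv g)
    (fun x _ => ((hf.differentiable (by simp)) x).hasDerivAt)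
    (fun x _ => ((hg.differentiable (by simp)) x).hasDerivAt)
    (intInt (cd_deriv hf).continuous) (intInt (cd_deriv hg).continuous)
  have hb : f (2*Real.pi) * g (2*Real.pi) - f 0 * g 0 = 0 := by
    have h1 : f (2*Real.pi) = f 0 := by simpa using pf 0
    have h2 : g (2*Real.pi) = g 0 := by simpa using pg 0
    rw [h1, h2, sub_self]
  rw [intervalIntegral.integral_add (intInt (f := fun x => deriv f x * g x) ((cd_deriv hf).continuous.mul (hg.continuous)))
      (intInt (f := fun x => f x * deriv g x) ((hf.continuous).mul (cd_deriv hg).continuous))] at hsum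
  rw [hb] at hsum
  linarith

lemma L2norm_nonneg (f : ℝ → ℝ) : 0 ≤ L2norm f := Real.sqrt_nonneg _

lemma L2norm_sq {f : ℝ → ℝ} (hf : Continuous f) :
    (L2norm f)^2 = ∫ x in (0:ℝ)..(2*Real.pi), (f x)^2 := by
  rw [L2norm, sq_sqrt]
  exact intervalIntegral.integral_nonneg (le_of_lt twopi_pos) (fun x _ => sq_nonneg _)

lemma discrim_le {a b c : ℝ} (ha : 0 ≤ a) (h : ∀ t : ℝ, 0 ≤ a*t^2 + 2*b*t + c) :
    b^2 ≤ a*c := by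
  rcases eq_or_lt_of_le ha with ha0 | hapos
  · have hb : b = 0 := by
      by_contra hb
      have ht := h (-(c + b^2)/(2*b))
      have heq : a*(-(c + b^2)/(2*b))^2 + 2*b*(-(c + b^2)/(2*b)) + c = -b^2 := by
        rw [← ha0]; field_simp; ring
      rw [heq] at ht
      nlinarith [sq_pos_of_ne_zero hb]
    have hc := h 0
    simp at hc
    rw [hb, ← ha0]
    nlinarith
  · have ht := h (-b/a)
    have : a*(-b/a)^2 + 2*b*(-b/a) + c = c - b^2/a := by field_simp; ring
    rw [this] at ht
    have := (div_le_iff₀ hapos).mp (by linarith : b^2/a ≤ c)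
    linarith [this]

/-- Cauchy-Schwarz for interval integrals of continuous functions. -/
lemma cauchy_schwarz {f g : ℝ → ℝ} (hf : Continuous f) (hg : Continuous g) :
    ∫ x in (0:ℝ)..(2*Real.pi), f x * g x ≤ L2norm f * L2norm g := by
  set a := ∫ x in (0:ℝ)..(2*Real.pi), (g x)^2 with hadef
  set b := ∫ x in (0:ℝ)..(2*Real.pi), f x * g x with hbdef
  set c := ∫ x in (0:ℝ)..(2*Real.pi), (f x)^2 with hcdef
  have ha : 0 ≤ a := intervalIntegral.integral_nonneg (le_of_lt twopi_pos) (fun x _ => sq_nonneg _)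
  have hc : 0 ≤ c := intervalIntegral.integral_nonneg (le_of_lt twopi_pos) (fun x _ => sq_nonneg _)
  have hq : ∀ t : ℝ, 0 ≤ a*t^2 + 2*b*t + c := by
    intro t
    have hnn : 0 ≤ ∫ x in (0:ℝ)..(2*Real.pi), (f x + t * g x)^2 :=
      intervalIntegral.integral_nonneg (le_of_lt twopi_pos) (fun x _ => sq_nonneg _)
    have hexp : (∫ x in (0:ℝ)..(2*Real.pi), (f x + t * g x)^2)
        = c + (2*t)*b + t^2*a := by
      have : (fun x => (f x + t * g x)^2)
          = fun x => (f x)^2 + ((2*t)*(f x * g x) + t^2 * (g x)^2) := by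
        funext x; ring
      rw [this, intervalIntegral.integral_add (intInt (by continuity))
            (intInt (by continuity)),
          intervalIntegral.integral_add (intInt (by continuity)) (intInt (by continuity)),
          intervalIntegral.integral_const_mul, intervalIntegral.integral_const_mul,
          ← hadef, ← hbdef, ← hcdef]
      ring
    rw [hexp] at hnn
    linarith
  have hb2 : b^2 ≤ a*c := discrim_le ha hq
  have : b ≤ Real.sqrt (b^2) := by
    rw [Real.sqrt_sq_eq_abs]; exact le_abs_self b
  calc b ≤ Real.sqrt (b^2) := this
    _ ≤ Real.sqrt (c*a) := Real.sqrt_le_sqrt (by linarith [hb2])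
    _ = Real.sqrt c * Real.sqrt a := Real.sqrt_mul hc a
    _ = L2norm f * L2norm g := rfl

lemma L2norm_abs (f : ℝ → ℝ) : L2norm (fun x => |f x|) = L2norm f := by
  unfold L2norm
  congr 1
  apply intervalIntegral.integral_congr
  intro x _
  simp [sq_abs]

lemma cauchy_schwarz_abs {f g : ℝ → ℝ} (hf : Continuous f) (hg : Continuous g) :
    ∫ x in (0:ℝ)..(2*Real.pi), |f x * g x| ≤ L2norm f * L2norm g := by
  have := cauchy_schwarz (f := fun x => |f x|) (g := fun x => |g x|) hf.abs hg.abs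
  rw [L2norm_abs, L2norm_abs] at this
  simpa [abs_mul] using this

lemma supNorm_bound {f : ℝ → ℝ} (hf : Continuous f) {x : ℝ}
    (hx : x ∈ Set.Icc (0:ℝ) (2*Real.pi)) : |f x| ≤ supNorm f := by
  apply le_csSup
  · exact (isCompact_Icc.image (continuous_abs.comp hf)).bddAbove
  · exact ⟨x, hx, rfl⟩

lemma supNorm_nonneg {f : ℝ → ℝ} (hf : Continuous f) : 0 ≤ supNorm f :=
  le_trans (abs_nonneg _) (supNorm_bound hf ⟨le_refl _, le_of_lt twopi_pos⟩)

/-- A continuous function with zero mean has a zero in the interval. -/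
lemma exists_zero {u : ℝ → ℝ} (hu : Continuous u)
    (hm : (∫ x in (0:ℝ)..(2*Real.pi), u x) = 0) :
    ∃ x₀ ∈ Set.Icc (0:ℝ) (2*Real.pi), u x₀ = 0 := by
  by_contra hcon
  push_neg at hcon
  have h0 : u 0 ≠ 0 := hcon 0 ⟨le_refl _, le_of_lt twopi_pos⟩
  rcases h0.lt_or_gt with hneg | hpos
  · have hall : ∀ x ∈ Set.Icc (0:ℝ) (2*Real.pi), u x < 0 := by
      intro x hx
      rcases (hcon x hx).lt_or_gt with h | h
      · exact h
      · exfalso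
        obtain ⟨y, hy, hy0⟩ := intermediate_value_uIcc (a := 0) (b := x)
          (hu.continuousOn) (show (0:ℝ) ∈ Set.uIcc (u 0) (u x) from
            Set.mem_uIcc.mpr (Or.inl ⟨le_of_lt hneg, le_of_lt h⟩))
        rw [Set.uIcc_of_le hx.1] at hy
        exact hcon y ⟨hy.1, le_trans hy.2 hx.2⟩ hy0
    have : 0 < (∫ x in (0:ℝ)..(2*Real.pi), -u x) := by
      apply intervalIntegral.intervalIntegral_pos_of_pos_on
        ((hu.neg).intervalIntegrable _ _) _ twopi_pos
      intro x hx
      have := hall x ⟨le_of_lt hx.1, le_of_lt hx.2⟩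
      show 0 < -u x; linarith
    rw [intervalIntegral.integral_neg, hm] at this
    simp at this
  · have hall : ∀ x ∈ Set.Icc (0:ℝ) (2*Real.pi), 0 < u x := by
      intro x hx
      rcases (hcon x hx).lt_or_gt with h | h
      · exfalso
        obtain ⟨y, hy, hy0⟩ := intermediate_value_uIcc (a := 0) (b := x)
          (hu.continuousOn) (show (0:ℝ) ∈ Set.uIcc (u 0) (u x) from
            Set.mem_uIcc.mpr (Or.inr ⟨le_of_lt h, le_of_lt hpos⟩))
        rw [Set.uIcc_of_le hx.1] at hy
        exact hcon y ⟨hy.1, le_trans hy.2 hx.2⟩ hy0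
      · exact h
    have : 0 < (∫ x in (0:ℝ)..(2*Real.pi), u x) :=
      intervalIntegral.intervalIntegral_pos_of_pos_on (hu.intervalIntegrable _ _)
        (fun x hx => hall x ⟨le_of_lt hx.1, le_of_lt hx.2⟩) twopi_pos
    rw [hm] at this
    exact lt_irrefl _ this

lemma abs_int_sub {g : ℝ → ℝ} (hg : Continuous g) {a b : ℝ}
    (ha : a ∈ Set.Icc (0:ℝ) (2*Real.pi)) (hb : b ∈ Set.Icc (0:ℝ) (2*Real.pi)) :
    |∫ t in a..b, g t| ≤ ∫ t in (0:ℝ)..(2*Real.pi), |g t| := by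
  have key : ∀ c d : ℝ, c ∈ Set.Icc (0:ℝ) (2*Real.pi) → d ∈ Set.Icc (0:ℝ) (2*Real.pi) →
      c ≤ d → |∫ t in c..d, g t| ≤ ∫ t in (0:ℝ)..(2*Real.pi), |g t| := by
    intro c d hc hd hcd
    calc |∫ t in c..d, g t| ≤ ∫ t in c..d, |g t| :=
          intervalIntegral.abs_integral_le_integral_abs hcd
      _ ≤ ∫ t in (0:ℝ)..(2*Real.pi), |g t| := by
          apply intervalIntegral.integral_mono_interval hc.1 hcd hd.2
          · filter_upwards with x using abs_nonneg _
          · exact intInt hg.abs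
  rcases le_total a b with h | h
  · exact key a b ha hb h
  · rw [intervalIntegral.integral_symm, abs_neg]
    exact key b a hb ha h

/-- Agmon-type inequality for zero-mean C^∞ functions on the circle. -/
lemma agmon {u : ℝ → ℝ} (hu : ContDiff ℝ (⊤ : ℕ∞) u)
    (hm : (∫ x in (0:ℝ)..(2*Real.pi), u x) = 0) :
    (supNorm u)^2 ≤ 2 * (L2norm u * L2norm (deriv u)) := by
  obtain ⟨x₀, hx₀, hz⟩ := exists_zero hu.continuous hm
  have hu' : Continuous (deriv u) := (cd_deriv hu).continuous
  have key : ∀ x ∈ Set.Icc (0:ℝ) (2*Real.pi),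
      (u x)^2 ≤ 2 * (L2norm u * L2norm (deriv u)) := by
    intro x hx
    have hft : (∫ t in x₀..x, 2 * (u t * deriv u t)) = (u x)^2 - (u x₀)^2 := by
      apply intervalIntegral.integral_eq_sub_of_hasDerivAt
        (f := fun t => (u t)^2)
      · intro t _
        have hd := ((hu.differentiable (by simp)) t).hasDerivAt
        simpa [mul_comm, mul_assoc, mul_left_comm] using (hd.fun_pow 2)
      · exact intInt (continuous_const.mul (hu.continuous.mul hu')) |>.mono_set (by
          apply Set.uIcc_subset_uIcc <;>
            simp [Set.mem_uIcc, hx₀.1, hx₀.2, hx.1, hx.2])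
    have h1 : (u x)^2 ≤ |∫ t in x₀..x, 2 * (u t * deriv u t)| := by
      rw [hft, hz]; simp [le_abs_self]
    have h2 : |∫ t in x₀..x, 2 * (u t * deriv u t)|
        ≤ ∫ t in (0:ℝ)..(2*Real.pi), |2 * (u t * deriv u t)| :=
      abs_int_sub (continuous_const.mul (hu.continuous.mul hu')) hx₀ hx
    have h3 : (∫ t in (0:ℝ)..(2*Real.pi), |2 * (u t * deriv u t)|)
        = 2 * ∫ t in (0:ℝ)..(2*Real.pi), |u t * deriv u t| := by
      rw [← intervalIntegral.integral_const_mul]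
      apply intervalIntegral.integral_congr
      intro t _
      show |2 * (u t * deriv u t)| = 2 * |u t * deriv u t|
      rw [abs_mul]
      simp
    have h4 := cauchy_schwarz_abs hu.continuous hu'
    linarith
  obtain ⟨xm, hxm, hsup⟩ := isCompact_Icc.exists_sSup_image_eq
    (Set.nonempty_Icc.mpr (le_of_lt twopi_pos)) (continuous_abs.comp hu.continuous).continuousOn
  have : supNorm u = |u xm| := hsup
  rw [this, sq_abs]
  exact key xm hxm

lemma young2 {a b ε : ℝ} (hε : 0 < ε) : a * b ≤ ε * a^2 + b^2/(4*ε) := by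
  rw [← sub_nonneg]
  have : ε * a^2 + b^2/(4*ε) - a*b = (2*ε*a - b)^2 / (4*ε) := by field_simp; ring
  rw [this]
  positivity

lemma wamgm {x y t : ℝ} (hx : 0 ≤ x) (hy : 0 ≤ y) (ht : 0 ≤ t)
    (h : t^8 ≤ x^7 * y) : t ≤ 7/8*x + 1/8*y := by
  have hgm := Real.geom_mean_le_arith_mean2_weighted
    (by norm_num : (0:ℝ) ≤ 7/8) (by norm_num : (0:ℝ) ≤ 1/8) hx hy (by norm_num)
  have hpow : (x ^ (7/8 : ℝ) * y ^ (1/8 : ℝ))^8 = x^7 * y := by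
    rw [mul_pow, ← Real.rpow_natCast (x ^ (7/8:ℝ)) 8, ← Real.rpow_natCast (y ^ (1/8:ℝ)) 8,
      ← Real.rpow_mul hx, ← Real.rpow_mul hy,
      show ((7:ℝ)/8) * (8:ℕ) = ((7:ℕ):ℝ) by norm_num,
      show ((1:ℝ)/8) * (8:ℕ) = ((1:ℕ):ℝ) by norm_num,
      Real.rpow_natCast, Real.rpow_natCast]
    ring
  have hs : 0 ≤ x ^ (7/8 : ℝ) * y ^ (1/8 : ℝ) := by positivity
  have hkey : t ≤ x ^ (7/8 : ℝ) * y ^ (1/8 : ℝ) :=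
    le_of_pow_le_pow_left₀ (n := 8) (by norm_num) hs (by rw [hpow]; exact h)
  linarith

lemma amgm_final {a b t θ : ℝ} (ha : 0 ≤ a) (hb : 0 ≤ b) (ht : 0 ≤ t) (hθ : 0 < θ)
    (h : t^8 ≤ 16 * a^10 * b^14) : t ≤ θ*b^2 + 7^7/(4^8 * θ^7) * a^10 := by
  have hx : (0:ℝ) ≤ (8*θ/7)*b^2 := by positivity
  have hy : (0:ℝ) ≤ 16*a^10*(7/(8*θ))^7 := by positivity
  have hxy : ((8*θ/7)*b^2)^7 * (16*a^10*(7/(8*θ))^7) = 16*a^10*b^14 := by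
    field_simp
  have := wamgm hx hy ht (by rw [hxy]; exact h)
  have h78 : 7/8*((8*θ/7)*b^2) = θ*b^2 := by ring
  have h18 : 1/8*(16*a^10*(7/(8*θ))^7) = 7^7/(2^20*θ^7)*a^10 := by
    field_simp
    ring
  have hcoef : 7^7/(2^20*θ^7)*a^10 ≤ 7^7/(4^8*θ^7)*a^10 := by
    apply mul_le_mul_of_nonneg_right _ (by positivity)
    apply div_le_div_of_nonneg_left (by norm_num) (by positivity)
    nlinarith [pow_pos hθ 7]
  linarith

lemma iter2 (f : ℝ → ℝ) : iteratedDeriv 2 f = deriv (deriv f) := by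
  rw [show (2:ℕ) = 1+1 from rfl, iteratedDeriv_succ, iteratedDeriv_one]

lemma iter4 (f : ℝ → ℝ) : iteratedDeriv 4 f = deriv (deriv (deriv (deriv f))) := by
  rw [show (4:ℕ) = 1+1+1+1 from rfl, iteratedDeriv_succ, iteratedDeriv_succ,
    iteratedDeriv_succ, iteratedDeriv_one]

lemma int_mono {f g : ℝ → ℝ} (hf : Continuous f) (hg : Continuous g)
    (h : ∀ x ∈ Set.Icc (0:ℝ) (2*Real.pi), f x ≤ g x) :
    (∫ x in (0:ℝ)..(2*Real.pi), f x) ≤ ∫ x in (0:ℝ)..(2*Real.pi), g x :=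
  intervalIntegral.integral_mono_on (le_of_lt twopi_pos) (intInt hf) (intInt hg) h

lemma int_flip (f g : ℝ → ℝ) :
    (∫ x in (0:ℝ)..(2*Real.pi), f x * g x) = ∫ x in (0:ℝ)..(2*Real.pi), g x * f x :=
  intervalIntegral.integral_congr (fun x _ => mul_comm _ _)

set_option maxHeartbeats 1000000 in
lemma main_ineq (u ψ w : ℝ → ℝ)
    (hu : ContDiff ℝ (⊤:ℕ∞) u) (hψ : ContDiff ℝ (⊤:ℕ∞) ψ) (hw : ContDiff ℝ (⊤:ℕ∞) w)
    (pu : Function.Periodic u (2*Real.pi)) (pψ : Function.Periodic ψ (2*Real.pi))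
    (pw : Function.Periodic w (2*Real.pi))
    (lamT δ εB εC εD : ℝ)
    (hlam : (∫ x in (0:ℝ)..(2*Real.pi), deriv u x *
        (deriv (deriv (deriv u)) x + 2 * deriv (deriv (fun y => u y * ψ y)) x))
        ≤ lamT * (L2norm u)^2)
    (hδ0 : 0 < δ) (hδ1 : δ < 1) (hB : 0 < εB) (hC : 0 < εC) (hD : 0 < εD)
    (hsum : εB + εC + εD = 1) :
    (∫ x in (0:ℝ)..(2*Real.pi), deriv u x *
        (deriv (deriv (deriv u)) x + 2 * deriv (deriv (fun y => u y * ψ y)) x))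
      + (∫ x in (0:ℝ)..(2*Real.pi), deriv u x * deriv (deriv (fun y => (u y)^2)) x)
      + (∫ x in (0:ℝ)..(2*Real.pi), deriv u x * deriv w x)
    ≤ (1-δ)*lamT*(L2norm u)^2
      + (9*δ/(4*εB))*(supNorm (deriv ψ))^2*(L2norm u)^2
      + (7^7/(4^8*(δ*εC)^7))*(L2norm u)^10
      + (1/(4*δ*εD))*(L2norm w)^2 := by
  -- smoothness and continuity of all players
  have hu1 : ContDiff ℝ (⊤:ℕ∞) (deriv u) := cd_deriv hu
  have hu2 : ContDiff ℝ (⊤:ℕ∞) (deriv (deriv u)) := cd_deriv hu1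
  have hu3 : ContDiff ℝ (⊤:ℕ∞) (deriv (deriv (deriv u))) := cd_deriv hu2
  have hψ1 : ContDiff ℝ (⊤:ℕ∞) (deriv ψ) := cd_deriv hψ
  have cu := hu.continuous
  have cu1 := hu1.continuous
  have cu2 := hu2.continuous
  have cu3 := hu3.continuous
  have cψ := hψ.continuous
  have cψ1 := hψ1.continuous
  have cw := hw.continuous
  have cw1 := (cd_deriv hw).continuous
  have pu1 : Function.Periodic (deriv u) (2*Real.pi) := periodic_deriv' pu
  have pu2 : Function.Periodic (deriv (deriv u)) (2*Real.pi) := periodic_deriv' pu1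
  have pψ1 : Function.Periodic (deriv ψ) (2*Real.pi) := periodic_deriv' pψ
  -- scalar abbreviations
  set A := L2norm u with hAdef
  set B2 := L2norm (deriv u) with hB2def
  set B3 := L2norm (deriv (deriv u)) with hB3def
  set M := supNorm (deriv u) with hMdef
  set P := supNorm (deriv ψ) with hPdef
  set W := L2norm w with hWdef
  have hAnn : 0 ≤ A := L2norm_nonneg _
  have hB2nn : 0 ≤ B2 := L2norm_nonneg _
  have hB3nn : 0 ≤ B3 := L2norm_nonneg _
  have hWnn : 0 ≤ W := L2norm_nonneg _
  have hMnn : 0 ≤ M := supNorm_nonneg cu1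
  have hPnn : 0 ≤ P := supNorm_nonneg cψ1
  have hB2sq : B2^2 = ∫ x in (0:ℝ)..(2*Real.pi), (deriv u x)^2 := L2norm_sq cu1
  have hB3sq : B3^2 = ∫ x in (0:ℝ)..(2*Real.pi), (deriv (deriv u) x)^2 := L2norm_sq cu2
  -- derivative formulas for the auxiliary products
  have dusq : deriv (fun y => (deriv u y)^2) = fun x => 2*(deriv u x * deriv (deriv u) x) := by
    funext x
    have h := ((hu1.differentiable (by simp)) x).hasDerivAt
    have := (h.fun_pow 2).deriv
    simpa [mul_comm, mul_assoc, mul_left_comm] using this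
  have husq : deriv (fun y => (u y)^2) = fun x => 2*(u x * deriv u x) := by
    funext x
    have h := ((hu.differentiable (by simp)) x).hasDerivAt
    have := (h.fun_pow 2).deriv
    simpa [mul_comm, mul_assoc, mul_left_comm] using this
  have hH1 : deriv (fun y => u y * ψ y) = fun x => deriv u x * ψ x + u x * deriv ψ x := by
    funext x
    exact deriv_fun_mul ((hu.differentiable (by simp)) x)
      ((hψ.differentiable (by simp)) x)
  -- smoothness/periodicity of auxiliary functions
  have hdusq : ContDiff ℝ (⊤:ℕ∞) (fun y => (deriv u y)^2) := hu1.pow 2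
  have hdusqP : Function.Periodic (fun y => (deriv u y)^2) (2*Real.pi) := fun x => by
    simp [pu1 x]
  have hH1s : ContDiff ℝ (⊤:ℕ∞) (fun x => deriv u x * ψ x + u x * deriv ψ x) :=
    (hu1.mul hψ).add (hu.mul hψ1)
  have hH1P : Function.Periodic (fun x => deriv u x * ψ x + u x * deriv ψ x) (2*Real.pi) :=
    fun x => by simp [pu1 x, pψ x, pu x, pψ1 x]
  have hG1s : ContDiff ℝ (⊤:ℕ∞) (fun x => 2*(u x * deriv u x)) :=
    ContDiff.mul contDiff_const (hu.mul hu1)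
  have hG1P : Function.Periodic (fun x => 2*(u x * deriv u x)) (2*Real.pi) :=
    fun x => by simp [pu x, pu1 x]
  -- zero mean of deriv u
  have hdm : (∫ x in (0:ℝ)..(2*Real.pi), deriv u x) = 0 := by
    rw [intervalIntegral.integral_deriv_eq_sub
      (fun x _ => (hu.differentiable (by simp)) x) (intInt cu1)]
    have := pu 0
    rw [zero_add] at this
    rw [this, sub_self]
  -- Agmon inequality
  have hM : M^2 ≤ 2*(B2*B3) := agmon hu1 hdm
  -- interpolation B2² ≤ A·B3
  have hB2AB3 : B2^2 ≤ A*B3 := by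
    have h1 : (∫ x in (0:ℝ)..(2*Real.pi), deriv u x * deriv u x)
        = -∫ x in (0:ℝ)..(2*Real.pi), u x * deriv (deriv u) x := ibp hu hu1 pu pu1
    have h2 : B2^2 = ∫ x in (0:ℝ)..(2*Real.pi), deriv u x * deriv u x := by
      rw [hB2sq]
      exact intervalIntegral.integral_congr (fun x _ => pow_two (deriv u x))
    have h3 : |∫ x in (0:ℝ)..(2*Real.pi), u x * deriv (deriv u) x|
        ≤ A * B3 := le_trans (abs_int_sub (cu.mul cu2)
          ⟨le_refl _, le_of_lt twopi_pos⟩ ⟨le_of_lt twopi_pos, le_refl _⟩)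
          (cauchy_schwarz_abs cu cu2)
    rw [h2, h1]
    calc -(∫ x in (0:ℝ)..(2*Real.pi), u x * deriv (deriv u) x)
        ≤ |∫ x in (0:ℝ)..(2*Real.pi), u x * deriv (deriv u) x| := neg_le_abs _
      _ ≤ A * B3 := h3
  -- identity I1 : ∫ u' u''' = -B3²
  have I1 : (∫ x in (0:ℝ)..(2*Real.pi), deriv u x * deriv (deriv (deriv u)) x) = -(B3^2) := by
    rw [int_flip, ibp hu2 hu1 pu2 pu1, hB3sq]
    congr 1
    exact intervalIntegral.integral_congr (fun x _ => (pow_two (deriv (deriv u) x)).symm)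
  -- key integrals
  set S2 := ∫ x in (0:ℝ)..(2*Real.pi), u x * deriv ψ x * deriv (deriv u) x with hS2def
  set Sψ := ∫ x in (0:ℝ)..(2*Real.pi), (deriv u x)^2 * deriv ψ x with hSψdef
  -- E3 : ∫ u' ψ u'' = -Sψ/2
  have E3 : (∫ x in (0:ℝ)..(2*Real.pi), deriv u x * ψ x * deriv (deriv u) x) = -(Sψ/2) := by
    have h1 : (∫ x in (0:ℝ)..(2*Real.pi), deriv (fun y => (deriv u y)^2) x * ψ x)
        = -∫ x in (0:ℝ)..(2*Real.pi), (deriv u x)^2 * deriv ψ x := ibp hdusq hψ hdusqP pψ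
    have h2 : (∫ x in (0:ℝ)..(2*Real.pi), deriv (fun y => (deriv u y)^2) x * ψ x)
        = 2 * ∫ x in (0:ℝ)..(2*Real.pi), deriv u x * ψ x * deriv (deriv u) x := by
      rw [← intervalIntegral.integral_const_mul]
      apply intervalIntegral.integral_congr
      intro x _
      rw [dusq]
      ring
    rw [← hSψdef] at h1
    rw [h2] at h1
    linarith
  -- I2 : ∫ u' * (u·ψ)'' = Sψ/2 - S2
  have I2 : (∫ x in (0:ℝ)..(2*Real.pi), deriv u x * deriv (deriv (fun y => u y * ψ y)) x)
      = Sψ/2 - S2 := by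
    have h0 : deriv (deriv (fun y => u y * ψ y))
        = deriv (fun x => deriv u x * ψ x + u x * deriv ψ x) := by rw [hH1]
    have h1 : (∫ x in (0:ℝ)..(2*Real.pi),
        deriv (fun x => deriv u x * ψ x + u x * deriv ψ x) x * deriv u x)
        = -∫ x in (0:ℝ)..(2*Real.pi),
            (deriv u x * ψ x + u x * deriv ψ x) * deriv (deriv u) x :=
      ibp hH1s hu1 hH1P pu1
    have h2 : (∫ x in (0:ℝ)..(2*Real.pi),
        (deriv u x * ψ x + u x * deriv ψ x) * deriv (deriv u) x)
        = (∫ x in (0:ℝ)..(2*Real.pi), deriv u x * ψ x * deriv (deriv u) x) + S2 := by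
      rw [hS2def, ← intervalIntegral.integral_add
        (intInt (by fun_prop)) (intInt (by fun_prop))]
      apply intervalIntegral.integral_congr
      intro x _
      ring
    rw [h0, int_flip, h1, h2, E3]
    ring
  -- T2 identity : ∫ u' (u²)'' = ∫ (u')³
  have J3 : (∫ x in (0:ℝ)..(2*Real.pi), deriv u x * deriv (deriv (fun y => (u y)^2)) x)
      = ∫ x in (0:ℝ)..(2*Real.pi), (deriv u x)^3 := by
    have h0 : deriv (deriv (fun y => (u y)^2)) = deriv (fun x => 2*(u x * deriv u x)) := by
      rw [husq]
    have h1 : (∫ x in (0:ℝ)..(2*Real.pi), deriv (fun x => 2*(u x * deriv u x)) x * deriv u x)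
        = -∫ x in (0:ℝ)..(2*Real.pi), (2*(u x * deriv u x)) * deriv (deriv u) x :=
      ibp hG1s hu1 hG1P pu1
    have h2 : (∫ x in (0:ℝ)..(2*Real.pi), deriv (fun y => (deriv u y)^2) x * u x)
        = -∫ x in (0:ℝ)..(2*Real.pi), (deriv u x)^2 * deriv u x := ibp hdusq hu hdusqP pu
    have h3 : (∫ x in (0:ℝ)..(2*Real.pi), deriv (fun y => (deriv u y)^2) x * u x)
        = ∫ x in (0:ℝ)..(2*Real.pi), (2*(u x * deriv u x)) * deriv (deriv u) x := by
      apply intervalIntegral.integral_congr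
      intro x _
      rw [dusq]
      ring
    have h4 : (∫ x in (0:ℝ)..(2*Real.pi), (deriv u x)^2 * deriv u x)
        = ∫ x in (0:ℝ)..(2*Real.pi), (deriv u x)^3 := by
      apply intervalIntegral.integral_congr
      intro x _
      ring
    rw [h0, int_flip, h1, ← h3, h2, h4, neg_neg]
  -- T3 identity and bound
  have K1 : (∫ x in (0:ℝ)..(2*Real.pi), deriv u x * deriv w x)
      = -∫ x in (0:ℝ)..(2*Real.pi), w x * deriv (deriv u) x := by
    rw [int_flip]
    exact ibp hw hu1 pw pu1
  have hK : (∫ x in (0:ℝ)..(2*Real.pi), deriv u x * deriv w x) ≤ W * B3 := by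
    rw [K1]
    calc -(∫ x in (0:ℝ)..(2*Real.pi), w x * deriv (deriv u) x)
        ≤ |∫ x in (0:ℝ)..(2*Real.pi), w x * deriv (deriv u) x| := neg_le_abs _
      _ ≤ ∫ x in (0:ℝ)..(2*Real.pi), |w x * deriv (deriv u) x| :=
          intervalIntegral.abs_integral_le_integral_abs (le_of_lt twopi_pos)
      _ ≤ W * B3 := cauchy_schwarz_abs cw cu2
  -- bound on Sψ
  have hSψ : Sψ ≤ P * B2^2 := by
    rw [hSψdef, hB2sq, ← intervalIntegral.integral_const_mul]
    apply int_mono (by fun_prop) (by fun_prop)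
    intro x hx
    have h1 : deriv ψ x ≤ P := le_trans (le_abs_self _) (supNorm_bound cψ1 hx)
    calc (deriv u x)^2 * deriv ψ x = deriv ψ x * (deriv u x)^2 := by ring
      _ ≤ P * (deriv u x)^2 := mul_le_mul_of_nonneg_right h1 (sq_nonneg _)
  -- bound on S2
  have hS2 : -S2 ≤ P * (A * B3) := by
    have habs : |S2| ≤ ∫ x in (0:ℝ)..(2*Real.pi), |u x * deriv ψ x * deriv (deriv u) x| := by
      rw [hS2def]
      exact intervalIntegral.abs_integral_le_integral_abs (le_of_lt twopi_pos)
    have hmono : (∫ x in (0:ℝ)..(2*Real.pi), |u x * deriv ψ x * deriv (deriv u) x|)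
        ≤ ∫ x in (0:ℝ)..(2*Real.pi), P * |u x * deriv (deriv u) x| := by
      apply int_mono (by fun_prop) (by fun_prop)
      intro x hx
      have h1 : |deriv ψ x| ≤ P := supNorm_bound cψ1 hx
      calc |u x * deriv ψ x * deriv (deriv u) x| = |deriv ψ x| * |u x * deriv (deriv u) x| := by
            rw [abs_mul, abs_mul, abs_mul]
            ring
        _ ≤ P * |u x * deriv (deriv u) x| :=
            mul_le_mul_of_nonneg_right h1 (abs_nonneg _)
    have hcs : (∫ x in (0:ℝ)..(2*Real.pi), |u x * deriv (deriv u) x|) ≤ A * B3 :=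
      cauchy_schwarz_abs cu cu2
    rw [intervalIntegral.integral_const_mul] at hmono
    calc -S2 ≤ |S2| := neg_le_abs _
      _ ≤ P * (∫ x in (0:ℝ)..(2*Real.pi), |u x * deriv (deriv u) x|) :=
          le_trans habs hmono
      _ ≤ P * (A * B3) := mul_le_mul_of_nonneg_left hcs hPnn
  -- bound on J := ∫ (u')³
  have hS3 : (∫ x in (0:ℝ)..(2*Real.pi), (deriv u x)^3) ≤ M * B2^2 := by
    rw [hB2sq, ← intervalIntegral.integral_const_mul]
    apply int_mono (by fun_prop) (by fun_prop)
    intro x hx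
    have h1 : |deriv u x| ≤ M := supNorm_bound cu1 hx
    calc (deriv u x)^3 = deriv u x * (deriv u x)^2 := by ring
      _ ≤ |deriv u x| * (deriv u x)^2 :=
          mul_le_mul_of_nonneg_right (le_abs_self _) (sq_nonneg _)
      _ ≤ M * (deriv u x)^2 := mul_le_mul_of_nonneg_right h1 (sq_nonneg _)
  have hJ : (∫ x in (0:ℝ)..(2*Real.pi), (deriv u x)^3)
      ≤ (δ*εC)*B3^2 + 7^7/(4^8*(δ*εC)^7)*A^10 := by
    set J := ∫ x in (0:ℝ)..(2*Real.pi), (deriv u x)^3 with hJdef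
    rcases le_or_gt J 0 with h | h
    · have : (0:ℝ) ≤ (δ*εC)*B3^2 + 7^7/(4^8*(δ*εC)^7)*A^10 := by positivity
      linarith
    · apply amgm_final hAnn hB3nn h.le (by positivity)
      have h1 : J^8 ≤ (M*B2^2)^8 := pow_le_pow_left₀ h.le hS3 8
      have h2 : (M^2)^4 ≤ (2*(B2*B3))^4 := pow_le_pow_left₀ (sq_nonneg M) hM 4
      have h3 : (B2^2)^8 ≤ (A*B3)^8 := pow_le_pow_left₀ (sq_nonneg B2) hB2AB3 8
      have h4 : (B2^2)^2 ≤ (A*B3)^2 := pow_le_pow_left₀ (sq_nonneg B2) hB2AB3 2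
      calc J^8 ≤ (M*B2^2)^8 := h1
        _ = (M^2)^4 * (B2^2)^8 := by ring
        _ ≤ (2*(B2*B3))^4 * (A*B3)^8 :=
            mul_le_mul h2 h3 (by positivity) (by positivity)
        _ = 16*(B2^2)^2 * (A^8*B3^12) := by ring
        _ ≤ 16*(A*B3)^2 * (A^8*B3^12) := by gcongr
        _ = 16*A^10*B3^14 := by ring
  -- assemble T1
  have cH2 : Continuous (deriv (deriv (fun y => u y * ψ y))) :=
    (cd_deriv (cd_deriv (hu.mul hψ))).continuous
  set T1 := ∫ x in (0:ℝ)..(2*Real.pi), deriv u x *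
      (deriv (deriv (deriv u)) x + 2 * deriv (deriv (fun y => u y * ψ y)) x) with hT1def
  have hT1split : T1 = -(B3^2) + Sψ - 2*S2 := by
    have h0 : T1 = (∫ x in (0:ℝ)..(2*Real.pi), deriv u x * deriv (deriv (deriv u)) x)
        + 2*(∫ x in (0:ℝ)..(2*Real.pi),
            deriv u x * deriv (deriv (fun y => u y * ψ y)) x) := by
      rw [hT1def, ← intervalIntegral.integral_const_mul, ← intervalIntegral.integral_add
        (intInt (f := fun x => deriv u x * deriv (deriv (deriv u)) x) (cu1.mul cu3))
        (intInt (f := fun x => 2 * (deriv u x * deriv (deriv (fun y => u y * ψ y)) x))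
          (continuous_const.mul (cu1.mul cH2)))]
      apply intervalIntegral.integral_congr
      intro x _
      ring
    rw [h0, I1, I2]
    ring
  -- Young-type bounds
  have hyB : B3*(3*P*A) ≤ εB*B3^2 + (3*P*A)^2/(4*εB) := young2 hB
  have hyD : B3*W ≤ (δ*εD)*B3^2 + W^2/(4*(δ*εD)) := young2 (by positivity)
  have hT1b : T1 ≤ -(B3^2) + εB*B3^2 + (3*P*A)^2/(4*εB) := by
    have hc : Sψ ≤ P*(A*B3) :=
      le_trans hSψ (mul_le_mul_of_nonneg_left hB2AB3 hPnn)
    have : T1 ≤ -(B3^2) + 3*(P*(A*B3)) := by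
      rw [hT1split]
      linarith
    have he : 3*(P*(A*B3)) = B3*(3*P*A) := by ring
    linarith [hyB, he ▸ this]
  -- final combination
  have hδT1 : δ*T1 ≤ δ*(-(B3^2)) + (δ*εB)*B3^2 + (9*δ/(4*εB))*(P^2*A^2) := by
    have := mul_le_mul_of_nonneg_left hT1b hδ0.le
    have he : δ*(-(B3^2) + εB*B3^2 + (3*P*A)^2/(4*εB))
        = δ*(-(B3^2)) + (δ*εB)*B3^2 + (9*δ/(4*εB))*(P^2*A^2) := by
      field_simp
      ring
    linarith [he ▸ this]
  have hlamT1 : (1-δ)*T1 ≤ (1-δ)*lamT*A^2 := by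
    have := mul_le_mul_of_nonneg_left hlam (by linarith : (0:ℝ) ≤ 1-δ)
    linarith [this]
  have hKfin : (∫ x in (0:ℝ)..(2*Real.pi), deriv u x * deriv w x)
      ≤ (δ*εD)*B3^2 + (1/(4*δ*εD))*W^2 := by
    have he : W^2/(4*(δ*εD)) = (1/(4*δ*εD))*W^2 := by
      rw [div_eq_mul_inv, one_div]
      rw [show 4*(δ*εD) = 4*δ*εD by ring]
      ring
    have hWB : W*B3 = B3*W := by ring
    linarith [hK, hyD, he ▸ hyD]
  have hzero : δ*(-(B3^2)) + (δ*εB)*B3^2 + (δ*εC)*B3^2 + (δ*εD)*B3^2 = 0 := by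
    have : εB = 1 - εC - εD := by linarith
    rw [this]
    ring
  have hsplitT : T1 + (∫ x in (0:ℝ)..(2*Real.pi),
        deriv u x * deriv (deriv (fun y => (u y)^2)) x)
      + (∫ x in (0:ℝ)..(2*Real.pi), deriv u x * deriv w x)
      = (1-δ)*T1 + δ*T1 + (∫ x in (0:ℝ)..(2*Real.pi), (deriv u x)^3)
        + (∫ x in (0:ℝ)..(2*Real.pi), deriv u x * deriv w x) := by
    rw [J3]
    ring
  rw [hsplitT]
  linarith [hδT1, hlamT1, hJ, hKfin, hzero]


set_option maxHeartbeats 1000000 in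
/-- the refined differential-inequality bound using an eigenvalue bound λ̃. -/
theorem stmt16 (d φ w : ℝ → ℝ) (hd : InH d) (hφ : InH φ) (hw : InH w)
    (lamT : ℝ)
    (hlam : L2inner (iteratedDeriv 2 d)
        (fun x => iteratedDeriv 4 d x
          + 2 * iteratedDeriv 2 (fun y => deriv d y * deriv φ y) x)
      ≤ lamT * (L2norm (deriv d))^2)
    (δ εB εC εD : ℝ) (hδ : δ ∈ Set.Ioo (0:ℝ) 1)
    (hB : 0 < εB) (hC : 0 < εC) (hD : 0 < εD) (hsum : εB + εC + εD = 1) :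
    L2inner (iteratedDeriv 2 d)
        (fun x => iteratedDeriv 4 d x
          + 2 * iteratedDeriv 2 (fun y => deriv d y * deriv φ y) x)
      + L2inner (iteratedDeriv 2 d) (iteratedDeriv 2 (fun x => (deriv d x)^2))
      + L2inner (iteratedDeriv 2 d) (deriv w)
    ≤ (1-δ) * lamT * (L2norm (deriv d))^2
      + (9*δ/(4*εB)) * (supNorm (iteratedDeriv 2 φ))^2 * (L2norm (deriv d))^2
      + (7^7/(4^8 * (δ*εC)^7)) * (L2norm (deriv d))^10
      + (1/(4*δ*εD)) * (L2norm w)^2 := by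
  simp only [L2inner, iter2, iter4] at hlam ⊢
  exact main_ineq (deriv d) (deriv φ) w (cd_deriv (hd.1.of_le (by simp)))
    (cd_deriv (hφ.1.of_le (by simp))) (hw.1.of_le (by simp))
    (periodic_deriv' hd.2.1) (periodic_deriv' hφ.2.1) hw.2.1 lamT δ εB εC εD hlam
    hδ.1 hδ.2 hB hC hD hsum
end
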